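/- The function h is nonincreasing on [r_h, ρ), and the limit of h(r) as r → ρ from the left (as r → ∞ in case ρ = ∞) exists and is finite; more precisely, there exists L with 0 ≤ L ≤ h(r_h) such that h(r) → L. -/

import Mathlib

lemma contDiffAt_one_deriv {w : ℝ → ℝ} {x : ℝ} (h : ContDiffAt ℝ 2 w x) :
    ContDiffAt ℝ 1 (deriv w) x := by
  obtain ⟨u, hu, hcd⟩ := h.contDiffOn le_rfl (by simp)
  have h2 : ContDiffOn ℝ 2 w (interior u) := hcd.mono interior_subset
  have h3 : ContDiffOn ℝ 1 (deriv w) (interior u) :=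
    h2.deriv_of_isOpen isOpen_interior (by norm_num)
  exact h3.contDiffAt (isOpen_interior.mem_nhds (mem_interior_iff_mem_nhds.2 hu))

lemma key_deriv (Λ : ℝ) (A w : ℝ → ℝ) (r : ℝ)
    (hr0 : 0 < r) (hA0 : A r ≠ 0)
    (hA : ContDiffAt ℝ 1 A r) (hw : ContDiffAt ℝ 2 w r)
    (hE1 : r * deriv A r + 2 * A r * (deriv w r) ^ 2
        = 1 - A r - (1 - (w r) ^ 2) ^ 2 / r ^ 2 - Λ * r ^ 2)
    (hE2 : r ^ 2 * A r * deriv (deriv w) r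
        + r * (1 - A r - (1 - (w r) ^ 2) ^ 2 / r ^ 2 - Λ * r ^ 2) * deriv w r
        + w r * (1 - (w r) ^ 2) = 0) :
    HasDerivAt (fun s => (1 - (w s) ^ 2) ^ 2 - 2 * s ^ 2 * A s * (deriv w s) ^ 2)
      (2 * r * (deriv w r) ^ 2 *
        ((1 - A r - (1 - (w r) ^ 2) ^ 2 / r ^ 2 - Λ * r ^ 2)
          - 2 * A r + 2 * A r * (deriv w r) ^ 2)) r := by
  have hwd : HasDerivAt w (deriv w r) r :=
    (hw.differentiableAt (by norm_num)).hasDerivAt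
  have hw'd : HasDerivAt (deriv w) (deriv (deriv w) r) r :=
    ((contDiffAt_one_deriv hw).differentiableAt one_ne_zero).hasDerivAt
  have hAd : HasDerivAt A (deriv A r) r := (hA.differentiableAt one_ne_zero).hasDerivAt
  have t1 : HasDerivAt (fun s => (1 - w s ^ 2) ^ 2)
      ((2:ℕ) * (1 - w r ^ 2) ^ 1 * -((2:ℕ) * w r ^ 1 * deriv w r)) r :=
    ((hwd.pow 2).const_sub 1).pow 2
  have t2 : HasDerivAt (fun s => s ^ 2 * A s)
      ((2:ℕ) * r ^ 1 * A r + r ^ 2 * deriv A r) r := (hasDerivAt_pow 2 r).mul hAd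
  have t3 : HasDerivAt (fun s => (deriv w s) ^ 2)
      ((2:ℕ) * deriv w r ^ 1 * deriv (deriv w) r) r := hw'd.pow 2
  have t4 := (t2.mul t3).const_mul (2:ℝ)
  have t5 := t1.sub t4
  have hfe : (fun s => (1 - (w s) ^ 2) ^ 2 - 2 * s ^ 2 * A s * (deriv w s) ^ 2)
      = (fun s => (1 - w s ^ 2) ^ 2 - 2 * (s ^ 2 * A s * (deriv w s) ^ 2)) := by
    funext s; ring
  rw [hfe]
  have hA' : deriv A r = (1 - A r - (1 - w r ^ 2) ^ 2 / r ^ 2 - Λ * r ^ 2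
      - 2 * A r * (deriv w r) ^ 2) / r := by
    rw [eq_div_iff hr0.ne']; linear_combination hE1
  have hw'' : deriv (deriv w) r
      = -(r * (1 - A r - (1 - w r ^ 2) ^ 2 / r ^ 2 - Λ * r ^ 2) * deriv w r
          + w r * (1 - w r ^ 2)) / (r ^ 2 * A r) := by
    rw [eq_div_iff (mul_ne_zero (pow_ne_zero 2 hr0.ne') hA0)]
    linear_combination hE2
  refine t5.congr_deriv ?_
  rw [hA', hw'']
  field_simp
  ring

lemma A_lower_bound (Λ r_h H : ℝ) (ρ : EReal) (A w : ℝ → ℝ)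
    (hrh0 : 0 < r_h)
    (hA : ∀ s : ℝ, r_h ≤ s → (s : EReal) < ρ → ContDiffAt ℝ 1 A s)
    (hE1 : ∀ s : ℝ, r_h < s → (s : EReal) < ρ →
      s * deriv A s + 2 * A s * (deriv w s) ^ 2
        = 1 - A s - (1 - (w s) ^ 2) ^ 2 / s ^ 2 - Λ * s ^ 2)
    (hAneg : ∀ s : ℝ, r_h < s → (s : EReal) < ρ → A s < 0)
    (hArh : A r_h = 0)
    (r : ℝ) (hr : r_h ≤ r) (hrρ : (r : EReal) < ρ)
    (hbd : ∀ s, r_h ≤ s → s ≤ r → (1 - w s ^ 2) ^ 2 ≤ H) :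
    (r - r_h) - H * (r_h⁻¹ - r⁻¹) - Λ * (r ^ 3 - r_h ^ 3) / 3 ≤ r * A r := by
  set φ : ℝ → ℝ := fun s =>
    s * A s - (s - r_h) + H * (r_h⁻¹ - s⁻¹) + Λ * (s ^ 3 - r_h ^ 3) / 3 with hφ
  have hmemD : ∀ s : ℝ, s ∈ Set.Icc r_h r → (s : EReal) < ρ := fun s hs =>
    lt_of_le_of_lt (EReal.coe_le_coe_iff.2 hs.2) hrρ
  have hds : ∀ s : ℝ, s ∈ Set.Ioo r_h r →
      HasDerivAt φ ((1 * A s + s * deriv A s - 1) + H * (- -(s ^ 2)⁻¹)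
        + Λ * ((3 : ℕ) * s ^ (3 - 1)) / 3) s := by
    intro s hs
    have hsD : (s : EReal) < ρ := hmemD s ⟨hs.1.le, hs.2.le⟩
    have hsne : s ≠ 0 := (hrh0.trans hs.1).ne'
    have hAd : HasDerivAt A (deriv A s) s :=
      ((hA s hs.1.le hsD).differentiableAt one_ne_zero).hasDerivAt
    exact ((((hasDerivAt_id s).mul hAd).sub ((hasDerivAt_id s).sub_const r_h)).add
        (((hasDerivAt_inv hsne).const_sub r_h⁻¹).const_mul H)).add
      ((((hasDerivAt_pow 3 s).sub_const (r_h ^ 3)).const_mul Λ).div_const 3)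
  have mono : MonotoneOn φ (Set.Icc r_h r) := by
    apply monotoneOn_of_deriv_nonneg (convex_Icc _ _)
    · intro s hs
      have hsD := hmemD s hs
      have hsne : s ≠ 0 := (hrh0.trans_le hs.1).ne'
      have hAc : ContinuousAt A s := (hA s hs.1 hsD).continuousAt
      exact (((continuousAt_id.mul hAc).sub (by fun_prop)).add
        (continuousAt_const.mul (continuousAt_const.sub (continuousAt_inv₀ hsne)))).add
        (by fun_prop) |>.continuousWithinAt
    · rw [interior_Icc]
      intro s hs
      exact ((hds s hs).differentiableAt).differentiableWithinAt
    · rw [interior_Icc]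
      intro s hs
      rw [(hds s hs).deriv]
      have hsD : (s : EReal) < ρ := hmemD s ⟨hs.1.le, hs.2.le⟩
      have hs0 : (0:ℝ) < s := hrh0.trans hs.1
      have hAneg' : A s < 0 := hAneg s hs.1 hsD
      have hE := hE1 s hs.1 hsD
      have hdA : deriv A s = (1 - A s - (1 - (w s) ^ 2) ^ 2 / s ^ 2 - Λ * s ^ 2
          - 2 * A s * (deriv w s) ^ 2) / s := by
        rw [eq_div_iff hs0.ne']; linear_combination hE
      have hval : (1 * A s + s * deriv A s - 1) + H * (- -(s ^ 2)⁻¹)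
          + Λ * ((3 : ℕ) * s ^ (3 - 1)) / 3
          = (H - (1 - w s ^ 2) ^ 2) / s ^ 2 - 2 * A s * (deriv w s) ^ 2 := by
        rw [hdA]; field_simp; ring
      rw [hval]
      have h1 : 0 ≤ (H - (1 - w s ^ 2) ^ 2) / s ^ 2 :=
        div_nonneg (sub_nonneg.2 (hbd s hs.1.le hs.2.le)) (sq_nonneg s)
      nlinarith [sq_nonneg (deriv w s),
        mul_nonpos_of_nonneg_of_nonpos (sq_nonneg (deriv w s)) hAneg'.le]
  have hend := mono (Set.left_mem_Icc.2 hr) (Set.right_mem_Icc.2 hr) hr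
  have hphirh : φ r_h = 0 := by simp [hφ, hArh]
  rw [hphirh] at hend
  simp only [hφ] at hend
  linarith

lemma deriv_h_nonpos (Λ r_h H : ℝ) (ρ : EReal) (A w : ℝ → ℝ)
    (hrh2 : 2 < r_h ^ 2) (hrh0 : 0 < r_h) (hΛrh : 1 < Λ * r_h ^ 2)
    (hH0 : 0 ≤ H) (hH1 : H ≤ 1)
    (hA : ∀ s : ℝ, r_h ≤ s → (s : EReal) < ρ → ContDiffAt ℝ 1 A s)
    (hw : ∀ s : ℝ, r_h ≤ s → (s : EReal) < ρ → ContDiffAt ℝ 2 w s)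
    (hE1 : ∀ s : ℝ, r_h < s → (s : EReal) < ρ →
      s * deriv A s + 2 * A s * (deriv w s) ^ 2
        = 1 - A s - (1 - (w s) ^ 2) ^ 2 / s ^ 2 - Λ * s ^ 2)
    (hE2 : ∀ s : ℝ, r_h < s → (s : EReal) < ρ →
      s ^ 2 * A s * deriv (deriv w) s
        + s * (1 - A s - (1 - (w s) ^ 2) ^ 2 / s ^ 2 - Λ * s ^ 2) * deriv w s
        + w s * (1 - (w s) ^ 2) = 0)
    (hAneg : ∀ s : ℝ, r_h < s → (s : EReal) < ρ → A s < 0)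
    (hArh : A r_h = 0)
    (r : ℝ) (hr : r_h < r) (hrρ : (r : EReal) < ρ)
    (hbd : ∀ s, r_h ≤ s → s ≤ r → (1 - w s ^ 2) ^ 2 ≤ H) :
    deriv (fun s => (1 - (w s) ^ 2) ^ 2 - 2 * s ^ 2 * A s * (deriv w s) ^ 2) r ≤ 0 := by
  have hr0 : 0 < r := hrh0.trans hr
  have hAr : A r < 0 := hAneg r hr hrρ
  have hkd := key_deriv Λ A w r hr0 hAr.ne (hA r hr.le hrρ) (hw r hr.le hrρ)
    (hE1 r hr hrρ) (hE2 r hr hrρ)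
  rw [hkd.deriv]
  have hX := A_lower_bound Λ r_h H ρ A w hrh0 hA hE1 hAneg hArh r hr.le hrρ hbd
  have hXp : r_h * r * ((r - r_h) - H * (r_h⁻¹ - r⁻¹) - Λ * (r ^ 3 - r_h ^ 3) / 3)
      = r_h * r ^ 2 - r_h ^ 2 * r - H * r + H * r_h
        - Λ * (r_h * r ^ 4 - r_h ^ 4 * r) / 3 := by
    field_simp; ring
  have hmul : r_h * r ^ 2 - r_h ^ 2 * r - H * r + H * r_h
      - Λ * (r_h * r ^ 4 - r_h ^ 4 * r) / 3 ≤ r_h * r * (r * A r) := by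
    rw [← hXp]; exact mul_le_mul_of_nonneg_left hX (by positivity)
  have hkey : -2 * r_h * r ^ 2 + 3 * r_h ^ 2 * r + 3 * H * r - 3 * H * r_h
      - Λ * r_h ^ 4 * r ≤ 0 := by
    have haux : (0:ℝ) ≤ r_h ^ 2 + Λ * r_h ^ 4 - 3 * H := by
      nlinarith [mul_pos (show (0:ℝ) < Λ * r_h ^ 2 - 1 by linarith)
        (show (0:ℝ) < r_h ^ 2 by linarith)]
    nlinarith [mul_nonneg (sub_nonneg.2 hr.le) haux,
      mul_nonneg (mul_nonneg (sub_nonneg.2 hr.le) (sub_nonneg.2 hr.le)) hrh0.le,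
      mul_pos (mul_pos hrh0 hrh0) (mul_pos hrh0
        (show (0:ℝ) < Λ * r_h ^ 2 - 1 by linarith))]
  have hBle : 1 - 3 * A r - Λ * r ^ 2 ≤ 0 := by
    by_contra hc
    push_neg at hc
    nlinarith [mul_pos (mul_pos hrh0 (mul_pos hr0 hr0)) hc, hmul, hkey]
  have h2A : 2 * A r * (deriv w r) ^ 2 ≤ 0 :=
    mul_nonpos_of_nonpos_of_nonneg (by linarith) (sq_nonneg _)
  have hdivnn : 0 ≤ (1 - w r ^ 2) ^ 2 / r ^ 2 := by positivity
  exact mul_nonpos_of_nonneg_of_nonpos (by positivity) (by linarith)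



/-- For a noncompact solution of the static spherically symmetric
Einstein–SU(2) Yang–Mills equations with cosmological constant `Λ` extended
across its coordinate horizon at `r_h`, defined on `[r_h, ρ)` with
`r_h < ρ ≤ ∞`, the quantity `h(r) = (1 - w(r)²)² - 2 r² A(r) w'(r)²` is
nonincreasing on `[r_h, ρ)` and tends, as `r → ρ⁻` (i.e. as `r → ∞` when
`ρ = ∞`), to a finite limit `L` with `0 ≤ L ≤ h(r_h)`.  (The left-limit filter
at `ρ` is expressed uniformly as the pullback along `ℝ → EReal` of the
punctured left neighborhood filter of `ρ` in `EReal`; for finite `ρ` it is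
`𝓝[<] ρ`, and for `ρ = ∞` it is `atTop`.) -/
theorem h_monotone_limit
    (Λ r_h : ℝ) (ρ : EReal) (hΛ : 0 < Λ) (hrh : Real.sqrt 2 < r_h)
    (hΛrh : 1 < Λ * r_h ^ 2) (hρ : (r_h : EReal) < ρ)
    (A w : ℝ → ℝ)
    (hA : ∀ r : ℝ, r_h ≤ r → (r : EReal) < ρ → ContDiffAt ℝ 1 A r)
    (hw : ∀ r : ℝ, r_h ≤ r → (r : EReal) < ρ → ContDiffAt ℝ 2 w r)
    (hE1 : ∀ r : ℝ, r_h < r → (r : EReal) < ρ →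
      r * deriv A r + 2 * A r * (deriv w r) ^ 2
        = 1 - A r - (1 - (w r) ^ 2) ^ 2 / r ^ 2 - Λ * r ^ 2)
    (hE2 : ∀ r : ℝ, r_h < r → (r : EReal) < ρ →
      r ^ 2 * A r * deriv (deriv w) r
        + r * (1 - A r - (1 - (w r) ^ 2) ^ 2 / r ^ 2 - Λ * r ^ 2) * deriv w r
        + w r * (1 - (w r) ^ 2) = 0)
    (hArh : A r_h = 0)
    (hAneg : ∀ r : ℝ, r_h < r → (r : EReal) < ρ → A r < 0)
    (hwrh : (1 - (w r_h) ^ 2) ^ 2 < 1) :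
    AntitoneOn (fun r => (1 - (w r) ^ 2) ^ 2 - 2 * r ^ 2 * A r * (deriv w r) ^ 2)
        {r : ℝ | r_h ≤ r ∧ (r : EReal) < ρ}
    ∧ ∃ L : ℝ, 0 ≤ L
        ∧ L ≤ (1 - (w r_h) ^ 2) ^ 2 - 2 * r_h ^ 2 * A r_h * (deriv w r_h) ^ 2
        ∧ Filter.Tendsto
            (fun r => (1 - (w r) ^ 2) ^ 2 - 2 * r ^ 2 * A r * (deriv w r) ^ 2)
            (Filter.comap (fun x : ℝ => (x : EReal)) (nhdsWithin ρ (Set.Iio ρ)))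
            (nhds L) := by
  set hfun : ℝ → ℝ := fun s => (1 - (w s) ^ 2) ^ 2 - 2 * s ^ 2 * A s * (deriv w s) ^ 2
    with hfundef
  have hrh0 : 0 < r_h := lt_trans (Real.sqrt_pos.2 (by norm_num)) hrh
  have hrh2 : 2 < r_h ^ 2 := by
    nlinarith [Real.sq_sqrt (show (0:ℝ) ≤ 2 by norm_num), Real.sqrt_nonneg 2]
  set h0 : ℝ := (1 - (w r_h) ^ 2) ^ 2 with h0def
  have hfunrh : hfun r_h = h0 := by
    simp only [hfundef, h0def]; rw [hArh]; ring
  have h00 : 0 ≤ h0 := sq_nonneg _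
  have h01 : h0 < 1 := hwrh
  have hAle : ∀ s, r_h ≤ s → (s : EReal) < ρ → A s ≤ 0 := by
    intro s hs hsρ
    rcases eq_or_lt_of_le hs with he | hl
    · rw [← he, hArh]
    · exact (hAneg s hl hsρ).le
  have hfun_ge_sq : ∀ s, r_h ≤ s → (s : EReal) < ρ → (1 - w s ^ 2) ^ 2 ≤ hfun s := by
    intro s hs hsρ
    simp only [hfundef]
    nlinarith [mul_nonpos_of_nonneg_of_nonpos
      (show (0:ℝ) ≤ 2 * s ^ 2 * (deriv w s) ^ 2 by positivity) (hAle s hs hsρ)]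
  have hfun_ge0 : ∀ s, r_h ≤ s → (s : EReal) < ρ → 0 ≤ hfun s := fun s hs hsρ =>
    le_trans (sq_nonneg _) (hfun_ge_sq s hs hsρ)
  have hcont : ∀ s, r_h ≤ s → (s : EReal) < ρ → ContinuousAt hfun s := by
    intro s hs hsρ
    have hcw : ContinuousAt w s := (hw s hs hsρ).continuousAt
    have hcw' : ContinuousAt (deriv w) s :=
      (contDiffAt_one_deriv (hw s hs hsρ)).continuousAt
    have hcA : ContinuousAt A s := (hA s hs hsρ).continuousAt
    rw [hfundef]
    exact ((continuousAt_const.sub (hcw.pow 2)).pow 2).sub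
      ((((continuousAt_const.mul (continuousAt_id.pow 2)).mul hcA).mul (hcw'.pow 2)))
  have hdiff : ∀ s, r_h < s → (s : EReal) < ρ → DifferentiableAt ℝ hfun s := by
    intro s hs1 hs2
    rw [hfundef]
    exact (key_deriv Λ A w s (hrh0.trans hs1) (hAneg s hs1 hs2).ne
      (hA s hs1.le hs2) (hw s hs1.le hs2) (hE1 s hs1 hs2) (hE2 s hs1 hs2)).differentiableAt
  have step : ∀ ε : ℝ, 0 < ε → h0 + ε ≤ 1 →
      ∀ r, r_h ≤ r → (r : EReal) < ρ → hfun r ≤ h0 + ε := by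
    intro ε hε hε1
    by_contra hcon
    push_neg at hcon
    obtain ⟨x, hx1, hx2, hx3⟩ := hcon
    set Bad : Set ℝ := {b | (r_h ≤ b ∧ (b : EReal) < ρ) ∧ h0 + ε < hfun b} with hBad
    have hne : Bad.Nonempty := ⟨x, ⟨hx1, hx2⟩, hx3⟩
    have hbdd : BddBelow Bad := ⟨r_h, fun b hb => hb.1.1⟩
    set T := sInf Bad with hT
    have hT1 : r_h ≤ T := le_csInf hne fun b hb => hb.1.1
    have hTx : T ≤ x := csInf_le hbdd ⟨⟨hx1, hx2⟩, hx3⟩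
    have hT2 : (T : EReal) < ρ := lt_of_le_of_lt (EReal.coe_le_coe_iff.2 hTx) hx2
    have hTge : h0 + ε ≤ hfun T := by
      have hclos : T ∈ closure Bad := csInf_mem_closure hne hbdd
      obtain ⟨u, hu, hulim⟩ := mem_closure_iff_seq_limit.1 hclos
      exact ge_of_tendsto ((hcont T hT1 hT2).tendsto.comp hulim)
        (Filter.Eventually.of_forall fun n => (hu n).2.le)
    have hbelow : ∀ s, r_h ≤ s → s < T → hfun s ≤ h0 + ε := by
      intro s hs hsT
      by_contra hcs
      push_neg at hcs
      have hsmem : s ∈ Bad :=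
        ⟨⟨hs, lt_trans (EReal.coe_lt_coe_iff.2 hsT) hT2⟩, hcs⟩
      exact absurd (csInf_le hbdd hsmem) (not_le.2 hsT)
    have hanti : AntitoneOn hfun (Set.Icc r_h T) := by
      apply antitoneOn_of_deriv_nonpos (convex_Icc _ _)
      · intro s hs
        exact (hcont s hs.1 (lt_of_le_of_lt (EReal.coe_le_coe_iff.2 hs.2) hT2)).continuousWithinAt
      · rw [interior_Icc]
        intro s hs
        exact (hdiff s hs.1 (lt_trans (EReal.coe_lt_coe_iff.2 hs.2) hT2)).differentiableWithinAt
      · rw [interior_Icc]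
        intro s hs
        have hsρ : (s : EReal) < ρ := lt_trans (EReal.coe_lt_coe_iff.2 hs.2) hT2
        rw [hfundef]
        apply deriv_h_nonpos Λ r_h (h0 + ε) ρ A w hrh2 hrh0 hΛrh (by linarith) hε1
          hA hw hE1 hE2 hAneg hArh s hs.1 hsρ
        intro u hu1 hu2
        have huT : u < T := lt_of_le_of_lt hu2 hs.2
        have huρ : (u : EReal) < ρ := lt_trans (EReal.coe_lt_coe_iff.2 huT) hT2
        exact le_trans (hfun_ge_sq u hu1 huρ) (hbelow u hu1 huT)
    have hfin := hanti (Set.left_mem_Icc.2 hT1) (Set.right_mem_Icc.2 hT1) hT1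
    rw [hfunrh] at hfin
    linarith
  have hbound : ∀ r, r_h ≤ r → (r : EReal) < ρ → hfun r ≤ h0 := by
    intro r hr hrρ
    by_contra hcr
    push_neg at hcr
    clear_value hfun h0
    have hδ : 0 < hfun r - h0 := by linarith
    obtain ⟨ε, hε0, hεa, hεb⟩ : ∃ ε : ℝ, 0 < ε ∧ ε ≤ (hfun r - h0) / 2 ∧ h0 + ε ≤ 1 := by
      refine ⟨min ((hfun r - h0) / 2) ((1 - h0) / 2),
        lt_min (div_pos hδ two_pos) (div_pos (by linarith) two_pos), min_le_left _ _, ?_⟩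
      have := min_le_right ((hfun r - h0) / 2) ((1 - h0) / 2)
      linarith
    have := step ε hε0 hεb r hr hrρ
    linarith
  have hDconv : Convex ℝ {r : ℝ | r_h ≤ r ∧ (r : EReal) < ρ} := by
    rw [convex_iff_ordConnected]
    constructor
    intro a ha b hb y hy
    exact ⟨le_trans ha.1 hy.1, lt_of_le_of_lt (EReal.coe_le_coe_iff.2 hy.2) hb.2⟩
  have hDsub : interior {r : ℝ | r_h ≤ r ∧ (r : EReal) < ρ}
      ⊆ {r : ℝ | r_h < r ∧ (r : EReal) < ρ} := by
    intro s hs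
    refine ⟨?_, (interior_subset hs).2⟩
    have h1 : {r : ℝ | r_h ≤ r ∧ (r : EReal) < ρ} ⊆ Set.Ici r_h := fun u hu => hu.1
    have h2 := interior_mono h1 hs
    rwa [interior_Ici] at h2
  have hmain : AntitoneOn hfun {r : ℝ | r_h ≤ r ∧ (r : EReal) < ρ} := by
    apply antitoneOn_of_deriv_nonpos hDconv
    · intro s hs
      exact (hcont s hs.1 hs.2).continuousWithinAt
    · intro s hs
      obtain ⟨hs1, hs2⟩ := hDsub hs
      exact (hdiff s hs1 hs2).differentiableWithinAt
    · intro s hs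
      obtain ⟨hs1, hs2⟩ := hDsub hs
      rw [hfundef]
      apply deriv_h_nonpos Λ r_h h0 ρ A w hrh2 hrh0 hΛrh h00 h01.le
        hA hw hE1 hE2 hAneg hArh s hs1 hs2
      intro u hu1 hu2
      have huρ : (u : EReal) < ρ := lt_of_le_of_lt (EReal.coe_le_coe_iff.2 hu2) hs2
      exact le_trans (hfun_ge_sq u hu1 huρ) (hbound u hu1 huρ)
  refine ⟨hmain, ?_⟩
  obtain ⟨x0, hx01, hx02⟩ := EReal.lt_iff_exists_real_btwn.1 hρ
  have hx0 : r_h < x0 := EReal.coe_lt_coe_iff.1 hx01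
  set S := hfun '' {r : ℝ | r_h < r ∧ (r : EReal) < ρ} with hS
  have hSne : S.Nonempty := ⟨hfun x0, ⟨x0, ⟨hx0, hx02⟩, rfl⟩⟩
  have hSbdd : BddBelow S := by
    refine ⟨0, ?_⟩
    rintro y ⟨u, hu, rfl⟩
    exact hfun_ge0 u hu.1.le hu.2
  refine ⟨sInf S, le_csInf hSne (by rintro y ⟨u, hu, rfl⟩; exact hfun_ge0 u hu.1.le hu.2),
    ?_, ?_⟩
  · calc sInf S ≤ hfun x0 := csInf_le hSbdd ⟨x0, ⟨hx0, hx02⟩, rfl⟩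
      _ ≤ hfun r_h := hmain ⟨le_rfl, hρ⟩ ⟨hx0.le, hx02⟩ hx0.le
  · rw [Metric.tendsto_nhds]
    intro ε hε
    obtain ⟨y, hyS, hylt⟩ := exists_lt_of_csInf_lt hSne (lt_add_of_pos_right (sInf S) hε)
    obtain ⟨z, hz, rfl⟩ := hyS
    have hmem : Set.Ioo (z : EReal) ρ ∈ nhdsWithin ρ (Set.Iio ρ) := by
      rw [mem_nhdsWithin]
      exact ⟨Set.Ioi (z : EReal), isOpen_Ioi, hz.2, fun t ht => ⟨ht.1, ht.2⟩⟩
    filter_upwards [Filter.preimage_mem_comap hmem] with t ht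
    have htz : z < t := EReal.coe_lt_coe_iff.1 ht.1
    have htρ : (t : EReal) < ρ := ht.2
    have h1 : hfun t ≤ hfun z :=
      hmain ⟨hz.1.le, hz.2⟩ ⟨(hz.1.trans htz).le, htρ⟩ htz.le
    have h2 : sInf S ≤ hfun t := csInf_le hSbdd ⟨t, ⟨hz.1.trans htz, htρ⟩, rfl⟩
    rw [Real.dist_eq, abs_lt]
    constructor <;> linarith
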